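/- If a Boolean network f has no even-self-dual or odd-self-dual subnetwork, then f has a unique fixed point x, and for every y ∈ {0,1}^V the asynchronous state graph of f contains a path from y to x of length exactly the Hamming distance d(x,y). -/

import Mathlib

/-- The conjugate of `f`: `x ↦ f(x) ⊕ x`. -/
def conjNet {W : Type*} (f : (W → Bool) → (W → Bool)) : (W → Bool) → (W → Bool) :=
  fun x i => xor (f x i) (x i)

/-- `f` is self-dual: `f(x ⊕ 1) = f(x) ⊕ 1`. -/
def SelfDual {W : Type*} (f : (W → Bool) → (W → Bool)) : Prop :=
  ∀ x, f (fun i => !(x i)) = fun i => !(f x i)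

/-- A point has even parity if its number of `true` components is even. -/
def EvenPt {W : Type*} [Fintype W] (x : W → Bool) : Prop :=
  Even ((Finset.univ.filter (fun i => x i = true)).card)

/-- `f` is even: the image of its conjugate is exactly the set of even-parity points. -/
def IsEvenNet {W : Type*} [Fintype W] (f : (W → Bool) → (W → Bool)) : Prop :=
  Set.range (conjNet f) = {x | EvenPt x}

/-- `f` is odd: the image of its conjugate is exactly the set of odd-parity points. -/
def IsOddNet {W : Type*} [Fintype W] (f : (W → Bool) → (W → Bool)) : Prop :=
  Set.range (conjNet f) = {x | ¬ EvenPt x}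

/-- `h` is the subnetwork of `f` induced by fixing the components outside `I` to `z`. -/
def IsSubnetwork {V : Type*} [DecidableEq V] (f : (V → Bool) → (V → Bool)) (I : Finset V)
    (z : {i // i ∉ I} → Bool)
    (h : ({i // i ∈ I} → Bool) → ({i // i ∈ I} → Bool)) : Prop :=
  I.Nonempty ∧ ∀ y : {i // i ∈ I} → Bool,
    h y = fun j => f (fun v => if hv : v ∈ I then y ⟨v, hv⟩ else z ⟨v, hv⟩) j.1

/-- Arc of the asynchronous state graph: `y → y ⊕ e_i` whenever `f_i(y) ≠ y_i`. -/
def asynArc {W : Type*} [DecidableEq W] (f : (W → Bool) → (W → Bool))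
    (x y : W → Bool) : Prop :=
  ∃ i, f x i ≠ x i ∧ y = Function.update x i (!(x i))

/-!
Write `f̃ x = f x ⊕ x`, so that fixed points are the zeros of `f̃`. Suppose every proper
subnetwork of `g` has a bijective conjugate. Restricting to the coordinates where `x` and `y`
differ shows that `g̃ x = g̃ y` forces `y ∈ {x, x̄}`; restricting to all coordinates but `j`
shows that the fibres of `g̃` over `w` and `w ⊕ e_j` have two elements in total. So if `g̃` is
not injective, some fibre has two elements and the fibre sizes alternate between `2` and `0`
along the edges of the cube: every fibre over one parity class is a pair `{x, x̄}` and the other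
class is missed, i.e. `g` is self-dual and even or odd. By induction on subnetworks, `f̃` is
therefore bijective on every subnetwork. Its zero is the unique fixed point `x`, and for
`y ≠ x` bijectivity on the coordinates where `x` and `y` differ yields such a coordinate `i`
with `f_i(y) ≠ y_i`; flipping it brings `y` one step closer to `x`.
-/

open Finset Function

section Conjugate

variable {W : Type*}

/-- The conjugate of the subnetwork of `g` on the components `D`, with the others frozen at `z`,
is bijective; stated on points of `W` rather than on `{i // i ∈ D} → Bool`. -/
def FaceBijective (g : (W → Bool) → (W → Bool)) (D : Finset W) : Prop :=
  ∀ z w : W → Bool, ∃! x : W → Bool, (∀ i ∉ D, x i = z i) ∧ ∀ i ∈ D, conjNet g x i = w i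

theorem conjNet_eq_false_iff {f : (W → Bool) → (W → Bool)} {x : W → Bool} {i : W} :
    conjNet f x i = false ↔ f x i = x i := by
  simp [conjNet]

theorem FaceBijective.eq_of_stable {f : (W → Bool) → (W → Bool)} {D : Finset W}
    (hD : FaceBijective f D) {x y : W → Bool} (hxy : ∀ i ∉ D, x i = y i) (hx : ∀ i ∈ D, f x i = x i)
    (hy : ∀ i ∈ D, f y i = y i) : x = y :=
  (hD y fun _ => false).unique
    ⟨hxy, fun i hi => conjNet_eq_false_iff.2 (hx i hi)⟩
    ⟨fun _ _ => rfl, fun i hi => conjNet_eq_false_iff.2 (hy i hi)⟩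

theorem selfDual_of_conjNet_not {g : (W → Bool) → (W → Bool)}
    (h : ∀ x, conjNet g (fun i => !x i) = conjNet g x) : SelfDual g := fun x => funext fun i => by
  have := congrFun (h x) i
  simp only [conjNet] at this
  cases hx : x i <;> cases hg : g x i <;> simp_all

section DecidableEq

variable [DecidableEq W]

theorem eq_or_eq_update_not_iff {c w : W → Bool} {j : W} :
    (c = w ∨ c = update w j (!w j)) ↔ ∀ i ≠ j, c i = w i := by
  refine ⟨?_, fun h => ?_⟩
  · rintro (rfl | rfl) i hi
    exacts [rfl, update_of_ne hi _ _]
  · by_cases hj : c j = w j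
    · exact .inl <| funext fun i => if hij : i = j then hij ▸ hj else h i hij
    · refine .inr <| funext fun i => if hij : i = j then ?_ else by rw [update_of_ne hij, h i hij]
      subst hij
      simpa [Bool.eq_not_iff] using hj

end DecidableEq

variable [Fintype W]

instance : DecidablePred (EvenPt (W := W)) := fun _ => inferInstanceAs (Decidable (Even _))

theorem eq_or_eq_not_of_conjNet_eq {g : (W → Bool) → (W → Bool)}
    (hface : ∀ D : Finset W, D ≠ univ → FaceBijective g D) {x y : W → Bool}
    (h : conjNet g x = conjNet g y) : y = x ∨ y = fun i => !x i := by
  by_contra! hne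
  obtain ⟨hyx, hyn⟩ := hne
  set D : Finset W := {i | x i ≠ y i}
  have hD : D ≠ univ := fun hD => hyn <| funext fun i => by
    have hi : i ∈ D := hD ▸ mem_univ i
    simp only [D, mem_filter, mem_univ, true_and] at hi
    cases hx : x i <;> simp_all
  refine hyx ((hface D hD x (conjNet g x)).unique ⟨fun i hi => ?_, fun i _ => by rw [h]⟩
    ⟨fun _ _ => rfl, fun _ _ => rfl⟩)
  simpa [D, eq_comm] using hi

variable [DecidableEq W]

theorem evenPt_update_not (w : W → Bool) (j : W) : EvenPt (update w j (!w j)) ↔ ¬EvenPt w := by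
  unfold EvenPt
  cases hj : w j
  · have : ({i | update w j true i = true} : Finset W) =
        insert j ({i | w i = true} : Finset W) := by
      ext i
      by_cases hij : i = j <;> simp [hij, update_apply]
    rw [Bool.not_false, this, card_insert_of_notMem (by simp [hj]), Nat.even_add_one]
  · have : ({i | update w j false i = true} : Finset W) =
        ({i | w i = true} : Finset W).erase j := by
      ext i
      by_cases hij : i = j <;> simp [hij, update_apply]
    rw [Bool.not_true, this, ← card_erase_add_one (s := {i | w i = true}) (by simpa using hj),
      Nat.even_add_one, not_not]

theorem eq_ite_evenPt_of_add_update_eq_two {ν : (W → Bool) → ℕ}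
    (hν : ∀ w j, ν w + ν (update w j (!w j)) = 2) {w₀ : W → Bool} (h₀ : ν w₀ = 2)
    (w : W → Bool) : ν w = if (EvenPt w ↔ EvenPt w₀) then 2 else 0 := by
  suffices ∀ s : Finset W, ∀ w, (∀ i ∉ s, w i = w₀ i) →
      ν w = if (EvenPt w ↔ EvenPt w₀) then 2 else 0 from this univ w (by simp)
  intro s
  induction s using Finset.induction_on with
  | empty =>
    intro w hw
    obtain rfl : w = w₀ := funext fun i => hw i (notMem_empty i)
    simp [h₀]
  | insert j s hj ih =>
    intro w hw
    have hoff : ∀ i ∉ s, i ≠ j → w i = w₀ i := fun i hi hij => hw i (by simp [hij, hi])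
    by_cases hwj : w j = w₀ j
    · exact ih w fun i hi => if hij : i = j then hij ▸ hwj else hoff i hi hij
    · have hw' := ih (update w j (!w j)) fun i hi => by
        by_cases hij : i = j
        · subst hij; simpa [Bool.eq_not_iff, eq_comm] using hwj
        · rw [update_of_ne hij, hoff i hi hij]
      have hsum := hν w j
      rw [hw'] at hsum
      simp only [evenPt_update_not] at hsum
      by_cases hw : EvenPt w <;> by_cases hw₀ : EvenPt w₀ <;> simp_all

theorem card_fiber_add_card_fiber_update {g : (W → Bool) → (W → Bool)}
    (hface : ∀ D : Finset W, D ≠ univ → FaceBijective g D) (w : W → Bool) (j : W) :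
    #{x | conjNet g x = w} + #{x | conjNet g x = update w j (!w j)} = 2 := by
  have hdisj : Disjoint ({x | conjNet g x = w} : Finset (W → Bool))
      ({x | conjNet g x = update w j (!w j)} : Finset (W → Bool)) :=
    disjoint_filter.2 fun x _ h1 h2 => by simpa [h1] using congrFun h2 j
  rw [← card_union_of_disjoint hdisj, ← filter_or]
  simp only [eq_or_eq_update_not_iff]
  have hface_j : ∀ b, ∃! x : W → Bool, x j = b ∧ ∀ i ≠ j, conjNet g x i = w i := fun b => by
    simpa using hface (univ.erase j) (by simp) (fun _ => b) w
  obtain ⟨x₀, hx₀, hu₀⟩ := hface_j false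
  obtain ⟨x₁, hx₁, hu₁⟩ := hface_j true
  rw [card_eq_two]
  refine ⟨x₀, x₁, fun h => by simpa [h, hx₁.1] using hx₀.1, ?_⟩
  ext x
  simp only [mem_filter, mem_univ, true_and, mem_insert, mem_singleton]
  refine ⟨fun hx => ?_, by rintro (rfl | rfl); exacts [hx₀.2, hx₁.2]⟩
  cases hxj : x j
  exacts [.inl (hu₀ x ⟨hxj, hx⟩), .inr (hu₁ x ⟨hxj, hx⟩)]

theorem selfDual_and_parity_of_not_injective {g : (W → Bool) → (W → Bool)}
    (hface : ∀ D : Finset W, D ≠ univ → FaceBijective g D) (hinj : ¬Injective (conjNet g)) :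
    SelfDual g ∧ (IsEvenNet g ∨ IsOddNet g) := by
  obtain ⟨x₀, y₀, hconj₀, hne₀⟩ := not_injective_iff.mp hinj
  obtain ⟨j, -⟩ := Function.ne_iff.mp hne₀
  have hsum := card_fiber_add_card_fiber_update hface
  have htwo : #{x | conjNet g x = conjNet g x₀} = 2 := by
    refine le_antisymm (hsum _ j ▸ Nat.le_add_right _ _) ?_
    calc 2 = #{x₀, y₀} := (card_pair hne₀).symm
      _ ≤ _ := card_le_card fun t ht => by
        rcases mem_insert.1 ht with rfl | ht
        · simp
        · simp [mem_singleton.1 ht, hconj₀]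
  have hfiber := eq_ite_evenPt_of_add_update_eq_two hsum htwo
  have hrange : ∀ w, w ∈ Set.range (conjNet g) ↔ (EvenPt w ↔ EvenPt (conjNet g x₀)) := by
    intro w
    have : w ∈ Set.range (conjNet g) ↔ 0 < #{x | conjNet g x = w} := by
      simp [card_pos, filter_nonempty_iff]
    rw [this, hfiber]
    split_ifs <;> simpa
  refine ⟨selfDual_of_conjNet_not fun x => ?_, ?_⟩
  · have hsub : ({y | conjNet g y = conjNet g x} : Finset _) ⊆ {x, fun i => !x i} :=
      fun y hy => by
        rcases eq_or_eq_not_of_conjNet_eq hface (mem_filter.1 hy).2.symm with rfl | rfl <;> simp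
    have hx : #{y | conjNet g y = conjNet g x} = 2 := by
      have hpos : 0 < #{y | conjNet g y = conjNet g x} := card_pos.2 ⟨x, by simp⟩
      rw [hfiber] at hpos ⊢
      split_ifs at hpos ⊢ <;> omega
    have heq := eq_of_subset_of_card_le hsub (hx ▸ card_le_two)
    have hmem : (fun i => !x i) ∈ ({y | conjNet g y = conjNet g x} : Finset _) := heq ▸ by simp
    simpa using hmem
  · by_cases h : EvenPt (conjNet g x₀)
    · exact .inl <| Set.ext fun w => by simp [hrange, h]
    · exact .inr <| Set.ext fun w => by simp [hrange, h]

end Conjugate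

section Subnetwork

variable {V : Type*} [DecidableEq V]

def glue (D : Finset V) (u : {i // i ∈ D} → Bool) (z : {i // i ∉ D} → Bool) : V → Bool :=
  fun v => if hv : v ∈ D then u ⟨v, hv⟩ else z ⟨v, hv⟩

def subnetwork (f : (V → Bool) → (V → Bool)) (D : Finset V) (z : {i // i ∉ D} → Bool) :
    ({i // i ∈ D} → Bool) → ({i // i ∈ D} → Bool) :=
  fun u j => f (glue D u z) j

theorem isSubnetwork_subnetwork (f : (V → Bool) → (V → Bool)) {D : Finset V} (hD : D.Nonempty)
    (z : {i // i ∉ D} → Bool) : IsSubnetwork f D z (subnetwork f D z) :=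
  ⟨hD, fun _ => rfl⟩

theorem glue_restrict {D : Finset V} {z : {i // i ∉ D} → Bool} {x : V → Bool}
    (hx : ∀ v (hv : v ∉ D), x v = z ⟨v, hv⟩) : glue D (fun j => x j) z = x :=
  funext fun v => by
    by_cases hv : v ∈ D
    · simp [glue, hv]
    · simp [glue, hv, hx v hv]

theorem restrict_glue (D : Finset V) (u : {i // i ∈ D} → Bool) (z : {i // i ∉ D} → Bool) :
    (fun j : {i // i ∈ D} => glue D u z j) = u :=
  funext fun j => dif_pos j.2

theorem conjNet_subnetwork (f : (V → Bool) → (V → Bool)) (D : Finset V)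
    (z : {i // i ∉ D} → Bool) (u : {i // i ∈ D} → Bool) (j : {i // i ∈ D}) :
    conjNet (subnetwork f D z) u j = conjNet f (glue D u z) j := by
  simp [conjNet, subnetwork, glue]

theorem faceBijective_of_bijective_subnetwork {f : (V → Bool) → (V → Bool)} {D : Finset V}
    (h : ∀ z, Bijective (conjNet (subnetwork f D z))) : FaceBijective f D := by
  intro z w
  set zD : {i // i ∉ D} → Bool := fun v => z v
  obtain ⟨u, hu⟩ := (h zD).surjective fun j => w j
  refine ⟨glue D u zD, ⟨fun v hv => dif_neg hv, fun i hi => ?_⟩, ?_⟩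
  · rw [← conjNet_subnetwork f D zD u ⟨i, hi⟩, hu]
  · rintro x ⟨hxz, hxw⟩
    have hx : glue D (fun j => x j) zD = x := glue_restrict hxz
    rw [← hx]
    congr
    refine (h zD).injective (funext fun j => ?_)
    rw [hu, conjNet_subnetwork, hx, hxw j j.2]

theorem faceBijective_subnetwork {f : (V → Bool) → (V → Bool)} {D : Finset V}
    {z : {i // i ∉ D} → Bool} {D' : Finset {i // i ∈ D}}
    (h : FaceBijective f (D'.map (Embedding.subtype _))) :
    FaceBijective (subnetwork f D z) D' := by
  have hmem : ∀ j : {i // i ∈ D}, (j : V) ∈ D'.map (Embedding.subtype _) ↔ j ∈ D' :=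
    fun j => mem_map' (Embedding.subtype _)
  have hsub : ∀ v ∈ D'.map (Embedding.subtype _), v ∈ D := fun _ => D'.property_of_mem_map_subtype
  intro z' w'
  obtain ⟨x, ⟨hxz, hxw⟩, huniq⟩ := h (glue D z' z) (glue D w' fun _ => false)
  have hxD : ∀ v (hv : v ∉ D), x v = z ⟨v, hv⟩ := fun v hv => by
    rw [hxz v fun h' => hv (hsub v h')]
    exact dif_neg hv
  refine ⟨fun j => x j, ⟨fun j hj => ?_, fun j hj => ?_⟩, fun u ⟨huz, huw⟩ => ?_⟩
  · show x j = z' j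
    rw [hxz j ((hmem j).not.2 hj)]
    exact dif_pos j.2
  · rw [conjNet_subnetwork, glue_restrict hxD, hxw j ((hmem j).2 hj)]
    exact dif_pos j.2
  · have hglue : glue D u z = x := huniq _ ⟨fun v hv => ?_, fun v hv => ?_⟩
    · rw [← hglue, restrict_glue]
    · by_cases hvD : v ∈ D
      · simp only [glue, hvD, dif_pos]
        exact huz _ fun h' => hv ((hmem ⟨v, hvD⟩).2 h')
      · simp [glue, hvD]
    · have hvD := hsub v hv
      have hconj := conjNet_subnetwork f D z u ⟨v, hvD⟩
      rw [← hconj, huw _ ((hmem ⟨v, hvD⟩).1 hv)]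
      simp [glue, hvD]

theorem map_subtype_ssubset {D : Finset V} {D' : Finset {i // i ∈ D}} (hD' : D' ≠ univ) :
    D'.map (Embedding.subtype _) ⊂ D := by
  obtain ⟨j, hj⟩ : ∃ j, j ∉ D' := by
    by_contra! h
    exact hD' (eq_univ_of_forall h)
  exact (ssubset_iff_of_subset fun _ => D'.property_of_mem_map_subtype).2
    ⟨j, j.2, (mem_map' _).not.2 hj⟩

theorem faceBijective_of_noSelfDualParitySubnetwork [Fintype V] {f : (V → Bool) → (V → Bool)}
    (hf : ∀ (I : Finset V) (z : {i // i ∉ I} → Bool)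
      (h : ({i // i ∈ I} → Bool) → ({i // i ∈ I} → Bool)),
      IsSubnetwork f I z h → ¬ (SelfDual h ∧ (IsEvenNet h ∨ IsOddNet h)))
    (D : Finset V) : FaceBijective f D := by
  induction D using Finset.strongInduction with
  | H D ih =>
  refine faceBijective_of_bijective_subnetwork fun z => ?_
  rw [← Finite.injective_iff_bijective]
  by_contra hinj
  rcases D.eq_empty_or_nonempty with rfl | hD
  · exact hinj (injective_of_subsingleton _)
  · exact hf D z _ (isSubnetwork_subnetwork f hD z) <| selfDual_and_parity_of_not_injective
      (fun D' hD' => faceBijective_subnetwork (ih _ (map_subtype_ssubset hD'))) hinj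

end Subnetwork

section StateGraph

variable {V : Type*} [Fintype V] [DecidableEq V]

theorem hammingDist_update_not_add_one {x y : V → Bool} {i : V} (h : x i ≠ y i) :
    hammingDist x (update y i (!y i)) + 1 = hammingDist x y := by
  have : ({j | x j ≠ update y i (!y i) j} : Finset V) = ({j | x j ≠ y j} : Finset V).erase i := by
    ext j
    by_cases hji : j = i
    · subst hji
      simp [Bool.eq_not_iff.mpr h]
    · simp [hji]
  simp only [hammingDist, this]
  exact card_erase_add_one (by simpa using h)

theorem exists_asynPath_to {f : (V → Bool) → (V → Bool)} {x : V → Bool}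
    (hstep : ∀ y ≠ x, ∃ i, x i ≠ y i ∧ f y i ≠ y i) (y : V → Bool) :
    ∃ c : ℕ → (V → Bool), c 0 = y ∧ c (hammingDist x y) = x ∧
      ∀ t < hammingDist x y, asynArc f (c t) (c (t + 1)) := by
  generalize hn : hammingDist x y = n
  induction n generalizing y with
  | zero => exact ⟨fun _ => y, rfl, (hammingDist_eq_zero.1 hn).symm, by simp⟩
  | succ n ih =>
    have hyx : y ≠ x := by
      rintro rfl
      simp at hn
    obtain ⟨i, hxy, hfy⟩ := hstep y hyx
    obtain ⟨c, hc₀, hcn, hc⟩ := ih (update y i (!y i)) (by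
      have := hammingDist_update_not_add_one hxy
      omega)
    refine ⟨fun | 0 => y | t + 1 => c t, rfl, hcn, ?_⟩
    rintro (_ | t) ht
    · show asynArc f y (c 0)
      exact ⟨i, hfy, hc₀⟩
    · exact hc t (by omega)

end StateGraph

/-- If `f` has no even- or odd-self-dual subnetwork, then `f` has a unique fixed
point `x`, and from every point `y` the asynchronous state graph contains a path
to `x` of length exactly the Hamming distance `d(x,y)`. -/
theorem stmt_12 {V : Type*} [Fintype V] [DecidableEq V]
    (f : (V → Bool) → (V → Bool))
    (hyp : ∀ (I : Finset V) (z : {i // i ∉ I} → Bool)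
      (h : ({i // i ∈ I} → Bool) → ({i // i ∈ I} → Bool)),
      IsSubnetwork f I z h → ¬ (SelfDual h ∧ (IsEvenNet h ∨ IsOddNet h))) :
    ∃ x : V → Bool, f x = x ∧ (∀ y, f y = y → y = x) ∧
      ∀ y : V → Bool, ∃ c : ℕ → (V → Bool),
        c 0 = y ∧ c (hammingDist x y) = x ∧
        ∀ t < hammingDist x y, asynArc f (c t) (c (t + 1)) := by
  have hface := faceBijective_of_noSelfDualParitySubnetwork hyp
  obtain ⟨x, ⟨-, hx⟩, -⟩ := hface univ (fun _ => false) fun _ => false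
  have hfix : f x = x := funext fun i => conjNet_eq_false_iff.1 (hx i (mem_univ i))
  refine ⟨x, hfix, fun y hy => (hface univ).eq_of_stable (by simp)
    (fun i _ => congrFun hy i) (fun i _ => congrFun hfix i), exists_asynPath_to fun y hyx => ?_⟩
  by_contra! hstable
  exact hyx <| (hface {i | x i ≠ y i}).eq_of_stable (fun i hi => by simpa [eq_comm] using hi)
    (fun i hi => hstable i (by simpa using hi)) (fun i _ => congrFun hfix i)
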